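/- arXiv:2506.23330 — 5 statements merged into one kernel-verified Lean document; each statement's English description precedes it below -/
import Mathlib

section
/- Let q ≥ 2 and s ≥ 4 be integers, and set k_s = (q^s - 1)/(q - 1) and k_{s-1} = (q^{s-1} - 1)/(q - 1). If t is an integer with 1 ≤ t ≤ q² satisfying q·k_s·(t - q + 1) = t²·k_{s-1} + t, then t = q. -/
/-- For q ≥ 2, s ≥ 4, k_m = (q^m-1)/(q-1): if 1 ≤ t ≤ q² satisfies
q·k_s·(t - q + 1) = t²·k_{s-1} + t, then t = q. -/
theorem stmt_7 (q : ℤ) (hq : 2 ≤ q) (s : ℕ) (hs : 4 ≤ s)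
    (t : ℤ) (ht1 : 1 ≤ t) (ht2 : t ≤ q^2)
    (heq : q * ((q^s - 1) / (q - 1)) * (t - q + 1)
        = t^2 * ((q^(s-1) - 1) / (q - 1)) + t) :
    t = q := by
  have hq1 : (0:ℤ) < q - 1 := by linarith
  have hd1 : (q - 1) ∣ q^(s-1) - 1 := by
    simpa using sub_dvd_pow_sub_pow q 1 (s-1)
  have hd2 : (q - 1) ∣ q^s - 1 := by
    simpa using sub_dvd_pow_sub_pow q 1 s
  set k : ℤ := (q^(s-1) - 1) / (q - 1) with hkdef
  set K : ℤ := (q^s - 1) / (q - 1) with hKdef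
  have hk1 : (q - 1) * k = q^(s-1) - 1 := Int.mul_ediv_cancel' hd1
  have hK1 : (q - 1) * K = q^s - 1 := Int.mul_ediv_cancel' hd2
  have hss : s - 1 + 1 = s := by omega
  have hqs : q ^ s = q * q ^ (s-1) := by
    conv_lhs => rw [← hss]
    rw [pow_succ]; ring
  have hKk : K = q * k + 1 := by
    have h : (q - 1) * K = (q - 1) * (q * k + 1) := by
      rw [hK1]; nlinarith [hk1, hqs]
    exact mul_left_cancel₀ (by linarith) h
  -- k ≥ q + 1
  have hpow : q ^ 3 ≤ q ^ (s-1) := by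
    apply pow_le_pow_right₀ (by linarith) (by omega)
  have hkge : q + 1 ≤ k := by
    have h : (q - 1) * (q + 1) ≤ (q - 1) * k := by
      rw [hk1]; nlinarith
    exact le_of_mul_le_mul_left h hq1
  -- factorization
  have key : (q - t) * (k * (t - q^2 + q) - (q - 1)) = 0 := by
    rw [hKk] at heq; nlinarith [heq]
  rcases mul_eq_zero.mp key with h | h
  · linarith
  · have h2 : k * (t - q^2 + q) = q - 1 := by linarith
    rcases le_or_gt t (q^2 - q) with h3 | h3
    · have hk0 : (0:ℤ) ≤ k := by linarith
      have : k * (t - q^2 + q) ≤ 0 :=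
        mul_nonpos_of_nonneg_of_nonpos hk0 (by linarith)
      linarith
    · have h4 : 1 ≤ t - q^2 + q := by linarith
      have : k * 1 ≤ k * (t - q^2 + q) :=
        mul_le_mul_of_nonneg_left h4 (by linarith)
      linarith
end

section
/- For integers q ≥ 2 and s ≥ 4, the rational number (q-1)·((q^s-1)/(q-1)) divided by (q^{s-1}-1)/(q-1) is not an integer; i.e., (q^{s-1}-1)/(q-1) does not divide (q^s-1). -/
/-- For q ≥ 2 and s ≥ 4, k_{s-1} = (q^{s-1}-1)/(q-1) does not divide q^s - 1. -/
theorem stmt_9 (q : ℤ) (hq : 2 ≤ q) (s : ℕ) (hs : 4 ≤ s) :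
    ¬ ((q^(s-1) - 1) / (q - 1) ∣ (q^s - 1)) := by
  intro h
  have hq1 : q - 1 ≠ 0 := by omega
  set k : ℤ := (q^(s-1) - 1) / (q - 1) with hkdef
  have hgeo : (∑ i ∈ Finset.range (s-1), q^i) * (q-1) = q^(s-1) - 1 := geom_sum_mul q (s-1)
  have hkeq : k = ∑ i ∈ Finset.range (s-1), q^i := by
    rw [hkdef, ← hgeo, Int.mul_ediv_cancel _ hq1]
  have hk : k * (q - 1) = q^(s-1) - 1 := by rw [hkeq]; exact hgeo
  have hpow : q^s = q * q^(s-1) := by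
    rw [← pow_succ']
    congr 1
    omega
  obtain ⟨c, hc⟩ := h
  have hdvd : k ∣ q - 1 := ⟨c - q*(q-1), by linear_combination hc + q*hk - hpow⟩
  have hle : k ≤ q - 1 := Int.le_of_dvd (by omega) hdvd
  have hkpos : 0 < k := by
    rw [hkeq]
    have : (0:ℤ) < q^0 := by positivity
    calc (0:ℤ) < ∑ i ∈ Finset.range 1, q^i := by simpa using this
    _ ≤ ∑ i ∈ Finset.range (s-1), q^i := by
        apply Finset.sum_le_sum_of_subset_of_nonneg
        · exact Finset.range_subset_range.2 (by omega)
        · intro i _ _; positivity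
  have hcube : q^3 ≤ q^(s-1) := pow_le_pow_right₀ (by omega) (by omega)
  have : q^(s-1) - 1 ≤ (q-1)^2 := by
    calc q^(s-1) - 1 = k * (q-1) := hk.symm
    _ ≤ (q-1)*(q-1) := by nlinarith
    _ = (q-1)^2 := by ring
  nlinarith [hcube]
end

section
/- Let q ≥ 3 be an integer and t an integer with 1 ≤ t ≤ q². If t satisfies t·(q² + 1)·(q² - t) = (q-1)·(q²·(q²+1) + (q-1)(q² - q - t)) (the case s = 3 of the odd-dimensional equation), then t = q² - q. -/
/-- For q ≥ 3 and 1 ≤ t ≤ q²: if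
t·(q²+1)·(q²-t) = (q-1)·(q²·(q²+1) + (q-1)(q²-q-t)), then t = q² - q. -/
theorem stmt_12 (q : ℤ) (hq : 3 ≤ q) (t : ℤ) (ht1 : 1 ≤ t) (ht2 : t ≤ q^2)
    (heq : t * (q^2 + 1) * (q^2 - t)
        = (q - 1) * (q^2 * (q^2 + 1) + (q - 1) * (q^2 - q - t))) :
    t = q^2 - q := by
  have key : (t - (q^2 - q)) * ((q^2 + 1) * t - (q^3 + q^2 - q + 1)) = 0 := by
    linear_combination -heq
  rcases mul_eq_zero.mp key with h | h
  · linarith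
  · exfalso
    have h1 : q < t := by nlinarith
    have h2 : t < q + 1 := by nlinarith
    omega
end

section
/- Let q ≥ 3 and s ≥ 5 be integers with s odd. If t is an integer with 1 ≤ t ≤ q² satisfying t·(q^{s-1}+1)·(q² - t) = (q-1)·(q²·(q^{s-1}+1) + (q-1)(q² - q - t)), then t = q² - q. -/
/-- For q ≥ 3, odd s ≥ 5, and 1 ≤ t ≤ q²: if
t·(q^{s-1}+1)·(q²-t) = (q-1)·(q²·(q^{s-1}+1) + (q-1)(q²-q-t)), then t = q² - q. -/
theorem stmt_13 (q : ℤ) (hq : 3 ≤ q) (s : ℕ) (hs : 5 ≤ s) (hso : Odd s)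
    (t : ℤ) (ht1 : 1 ≤ t) (ht2 : t ≤ q^2)
    (heq : t * (q^(s-1) + 1) * (q^2 - t)
        = (q - 1) * (q^2 * (q^(s-1) + 1) + (q - 1) * (q^2 - q - t))) :
    t = q^2 - q := by
  set N : ℤ := q^(s-1) + 1 with hN
  have hNbig : q^4 + 1 ≤ N := by
    have : q^4 ≤ q^(s-1) :=
      pow_le_pow_right₀ (by linarith) (by omega)
    simp [hN]; linarith
  have hfac : (q^2 - q - t) * (N * (t - q) - (q - 1)^2) = 0 := by
    ring_nf
    ring_nf at heq
    linarith
  rcases mul_eq_zero.1 hfac with h | h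
  · linarith
  · exfalso
    have h' : N * (t - q) = (q - 1)^2 := by linarith
    have hq4 : (q-1)^2 < q^4 + 1 := by nlinarith
    rcases le_or_gt t q with hle | hlt
    · nlinarith
    · have : 1 ≤ t - q := by linarith
      nlinarith
end

section
/- For q ≥ 2 and s ≥ 2, the identity (1/q^{s-1})·[ (q^s(q^{s+1}+(-1)^s)/(q+1) - 1)·((q^{2s-2}-1)/(q²-1)) - ((q^{2s}-1)/(q²-1))·(q^{s-1}(q^s-(-1)^s)/(q+1) - 1) ] = (-1)^s · (q^s+(-1)^{s-1})(q^{s-1}-(-1)^{s-1})/(q²-1) holds; i.e., each non-tangent hyperplane contains exactly |H(s-1,q²)| black points. -/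
/-- Each non-tangent hyperplane contains exactly |H(s-1,q²)| black points:
the stated rational identity, for q ≥ 2 and s ≥ 2. -/
theorem stmt_19 (q : ℚ) (hq : 2 ≤ q) (s : ℕ) (hs : 2 ≤ s) :
    (1 / q^(s-1)) * ((q^s * (q^(s+1) + (-1)^s) / (q + 1) - 1)
          * ((q^(2*s-2) - 1) / (q^2 - 1))
        - ((q^(2*s) - 1) / (q^2 - 1))
          * (q^(s-1) * (q^s - (-1)^s) / (q + 1) - 1))
      = (-1)^s * ((q^s + (-1)^(s-1)) * (q^(s-1) - (-1)^(s-1)) / (q^2 - 1)) := by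
  obtain ⟨k, rfl⟩ : ∃ k, s = k + 2 := ⟨s - 2, by omega⟩
  have hq0 : q ≠ 0 := by linarith
  have hq1 : q + 1 ≠ 0 := by linarith
  have hq2 : q ^ 2 - 1 ≠ 0 := by nlinarith
  have hqk : q ^ k ≠ 0 := pow_ne_zero _ hq0
  have e1 : k + 2 - 1 = k + 1 := by omega
  have e2 : 2 * (k + 2) - 2 = 2 * k + 2 := by omega
  have e3 : 2 * (k + 2) = 2 * k + 4 := by omega
  have hb : ((-1 : ℚ) ^ k) ^ 2 = 1 := by
    rw [← pow_mul, mul_comm, pow_mul]; norm_num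
  rw [e1, e2, e3]
  simp only [pow_add, pow_mul]
  rcases Nat.even_or_odd k with hk | hk
  · simp only [hk.neg_one_pow]
    field_simp
    ring
  · simp only [hk.neg_one_pow]
    field_simp
    ring
end
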